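/- For all r₁, r₂ > 0 and every integer m ≥ 1, Q_{2m−1}(r₁,r₂) > 0. In particular, ψ₀(z) + γ < 0 for every z ∈ (0,1), so that μ₁ > 0 and μ₂ > 0. -/

import Mathlib

/-! For `z ∈ (0,1)` the series gives `ψ₀(z) + γ = (z − 1) ∑ 1/((k+1)(k+z)) < 0`, so numerator and
denominator of each `μ_j` are negative and `μ_j > 0`. For odd `k` the signs `(−1)^{k+1}` are `1`
and `ψ_k ≥ 0`, so `Q_k` is a positive multiple of `(μ₁ + μ₂) ζ(k+1) > 0` plus nonnegative terms. -/

open Real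

noncomputable section

/-- The digamma value `ψ₀(z) = −γ + ∑_{k≥0} (z−1)/((k+1)(k+z))`. -/
def digammaVal (z : ℝ) : ℝ :=
  -Real.eulerMascheroniConstant + ∑' k : ℕ, (z - 1) / ((k + 1) * (k + z))

/-- The polygamma value `ψ_k(z) = (−1)^{k+1} k! ∑_{m≥0} (m+z)^{−(k+1)}` (for `k ≥ 1`). -/
def polygammaVal (k : ℕ) (z : ℝ) : ℝ :=
  (-1) ^ (k + 1) * (k.factorial : ℝ) * ∑' m : ℕ, 1 / ((m : ℝ) + z) ^ (k + 1)

/-- The Riemann zeta value `ζ(s) = ∑_{n≥1} n^{−s}` (for `s ≥ 2`). -/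
def zetaVal (s : ℕ) : ℝ := ∑' n : ℕ, 1 / ((n : ℝ) + 1) ^ s

def rTilde (r₁ r₂ : ℝ) : ℝ := r₁ * r₂ / (r₁ + r₂)

/-- `μ_j` for `j = 1, 2`. -/
def muConst (r₁ r₂ : ℝ) (j : ℕ) : ℝ :=
  (digammaVal ((if j = 1 then r₁ else r₂) / (r₁ + r₂)) + Real.eulerMascheroniConstant) /
    (digammaVal (r₁ / (r₁ + r₂)) + digammaVal (r₂ / (r₁ + r₂)) +
      2 * Real.eulerMascheroniConstant)

/-- The coefficient `Q_k(r₁,r₂)` (for `k ≥ 1`). -/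
def Q (k : ℕ) (r₁ r₂ : ℝ) : ℝ :=
  4 * Real.pi * rTilde r₁ r₂ ^ (k + 1) *
    ((muConst r₁ r₂ 1 + (-1) ^ (k + 1) * muConst r₁ r₂ 2) * zetaVal (k + 1) +
      (muConst r₁ r₂ 1 * polygammaVal k (r₂ / (r₁ + r₂)) +
        (-1) ^ (k + 1) * muConst r₁ r₂ 2 * polygammaVal k (r₁ / (r₁ + r₂))) /
      (k.factorial : ℝ))

lemma summable_one_div_nat_add_pow {z : ℝ} (hz : 0 < z) {s : ℕ} (hs : 2 ≤ s) :
    Summable fun m : ℕ => 1 / ((m : ℝ) + z) ^ s := by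
  have h := (Real.summable_one_div_nat_add_rpow z s).mpr (by exact_mod_cast hs)
  refine h.congr fun m => ?_
  rw [abs_of_pos (by positivity), Real.rpow_natCast]

lemma summable_one_div_succ_mul_nat_add {z : ℝ} (hz : 0 < z) :
    Summable fun k : ℕ => 1 / (((k : ℝ) + 1) * ((k : ℝ) + z)) := by
  refine (summable_one_div_nat_add_pow (lt_min hz one_pos) le_rfl).of_nonneg_of_le
    (fun k => by positivity) fun k => ?_
  rw [sq]
  gcongr
  · exact min_le_right z 1
  · exact min_le_left z 1

lemma digammaVal_add_eulerMascheroniConstant (z : ℝ) :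
    digammaVal z + eulerMascheroniConstant =
      (z - 1) * ∑' k : ℕ, 1 / (((k : ℝ) + 1) * ((k : ℝ) + z)) := by
  rw [digammaVal, neg_add_cancel_comm, ← tsum_mul_left]
  simp only [mul_one_div]

lemma digammaVal_add_eulerMascheroniConstant_neg {z : ℝ} (hz₀ : 0 < z) (hz₁ : z < 1) :
    digammaVal z + eulerMascheroniConstant < 0 := by
  rw [digammaVal_add_eulerMascheroniConstant]
  refine mul_neg_of_neg_of_pos (by linarith) ?_
  exact (summable_one_div_succ_mul_nat_add hz₀).tsum_pos (fun k => by positivity) 0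
    (by positivity)

lemma muConst_pos {r₁ r₂ : ℝ} (hr₁ : 0 < r₁) (hr₂ : 0 < r₂) (j : ℕ) : 0 < muConst r₁ r₂ j := by
  have hneg : ∀ r, 0 < r → r < r₁ + r₂ →
      digammaVal (r / (r₁ + r₂)) + eulerMascheroniConstant < 0 := fun r hr hlt =>
    digammaVal_add_eulerMascheroniConstant_neg (by positivity)
      ((div_lt_one (by positivity)).mpr hlt)
  have h₁ := hneg r₁ hr₁ (by linarith)
  have h₂ := hneg r₂ hr₂ (by linarith)
  unfold muConst
  split_ifs <;> exact div_pos_of_neg_of_neg (by assumption) (by linarith)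

lemma zetaVal_pos {s : ℕ} (hs : 2 ≤ s) : 0 < zetaVal s :=
  (summable_one_div_nat_add_pow one_pos hs).tsum_pos (fun _ => by positivity) 0 (by simp)

lemma polygammaVal_nonneg {k : ℕ} (hk : Odd k) (z : ℝ) : 0 ≤ polygammaVal k z := by
  have hpow : ∀ x : ℝ, 0 ≤ x ^ (k + 1) := hk.add_one.pow_nonneg
  unfold polygammaVal
  exact mul_nonneg (mul_nonneg (hpow _) (by positivity))
    (tsum_nonneg fun m => one_div_nonneg.mpr (hpow _))

lemma Q_pos {k : ℕ} (hk : Odd k) {r₁ r₂ : ℝ} (hr₁ : 0 < r₁) (hr₂ : 0 < r₂) : 0 < Q k r₁ r₂ := by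
  have hsign : (-1 : ℝ) ^ (k + 1) = 1 := hk.add_one.neg_one_pow
  have hμ₁ := muConst_pos hr₁ hr₂ 1
  have hμ₂ := muConst_pos hr₁ hr₂ 2
  have hζ : 0 < zetaVal (k + 1) := zetaVal_pos (by obtain ⟨n, rfl⟩ := hk; omega)
  have hψ₁ := polygammaVal_nonneg hk (r₁ / (r₁ + r₂))
  have hψ₂ := polygammaVal_nonneg hk (r₂ / (r₁ + r₂))
  unfold Q rTilde
  rw [hsign]
  simp only [one_mul]
  positivity

theorem stmt9 (r₁ r₂ : ℝ) (hr₁ : 0 < r₁) (hr₂ : 0 < r₂) :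
    (∀ m : ℕ, 1 ≤ m → 0 < Q (2 * m - 1) r₁ r₂) ∧
    (∀ z ∈ Set.Ioo (0:ℝ) 1, digammaVal z + Real.eulerMascheroniConstant < 0) ∧
    0 < muConst r₁ r₂ 1 ∧ 0 < muConst r₁ r₂ 2 :=
  ⟨fun m hm => Q_pos ⟨m - 1, by omega⟩ hr₁ hr₂,
    fun _ hz => digammaVal_add_eulerMascheroniConstant_neg hz.1 hz.2,
    muConst_pos hr₁ hr₂ 1, muConst_pos hr₁ hr₂ 2⟩

end
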